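/- arXiv:1702.05578 — 5 statements merged into one kernel-verified Lean document; each statement's English description precedes it below -/
import Mathlib

section
/- Branching bisimilarity (the largest branching bisimulation, i.e., the union of all branching bisimulations) is an equivalence relation on processes of a labeled transition system. -/
/-- Silent-step closure (⇒): reflexive transitive closure of τ-transitions. -/
def SilentStar {S A : Type*} (trans : S → A → S → Prop) (tau : A) : S → S → Prop :=
  Relation.ReflTransGen (fun p q => trans p tau q)

/-- A symmetric relation is a branching bisimulation. -/
def IsBranchingBisim {S A : Type*} (trans : S → A → S → Prop) (tau : A)
    (R : S → S → Prop) : Prop :=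
  Symmetric R ∧
  ∀ a b a' (l : A), R a b → trans a l a' →
    (l = tau ∧ R a' b) ∨
    ∃ b'' b', SilentStar trans tau b b'' ∧ trans b'' l b' ∧ R a b'' ∧ R a' b'

/-- A symmetric relation is a weak bisimulation. -/
def IsWeakBisim {S A : Type*} (trans : S → A → S → Prop) (tau : A)
    (R : S → S → Prop) : Prop :=
  Symmetric R ∧
  ∀ a b a' (l : A), R a b → trans a l a' →
    (l = tau ∧ R a' b) ∨
    ∃ g1 g2 b', SilentStar trans tau b g1 ∧ trans g1 l g2 ∧
      SilentStar trans tau g2 b' ∧ R a' b'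

/-- Branching bisimilarity: the union of all branching bisimulations. -/
def BrBisim {S A : Type*} (trans : S → A → S → Prop) (tau : A) (a b : S) : Prop :=
  ∃ R, IsBranchingBisim trans tau R ∧ R a b

/-- Weak bisimilarity: the union of all weak bisimulations. -/
def WkBisim {S A : Type*} (trans : S → A → S → Prop) (tau : A) (a b : S) : Prop :=
  ∃ R, IsWeakBisim trans tau R ∧ R a b

/-! ### Auxiliary: semi-branching bisimulations (Basten's technique) -/

/-- A symmetric relation is a semi-branching bisimulation. -/
def IsSemiBranchingBisim {S A : Type*} (trans : S → A → S → Prop) (tau : A)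
    (R : S → S → Prop) : Prop :=
  Symmetric R ∧
  ∀ a b a' (l : A), R a b → trans a l a' →
    (l = tau ∧ ∃ b', SilentStar trans tau b b' ∧ R a b' ∧ R a' b') ∨
    ∃ b'' b', SilentStar trans tau b b'' ∧ trans b'' l b' ∧ R a b'' ∧ R a' b'

/-- Semi-branching bisimilarity. -/
def SbBisim {S A : Type*} (trans : S → A → S → Prop) (tau : A) (a b : S) : Prop :=
  ∃ R, IsSemiBranchingBisim trans tau R ∧ R a b

section Aux
variable {S A : Type*} {trans : S → A → S → Prop} {tau : A}

lemma brBisim_sbBisim {a b : S} (h : BrBisim trans tau a b) : SbBisim trans tau a b := by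
  obtain ⟨R, ⟨hsym, hR⟩, hab⟩ := h
  refine ⟨R, ⟨hsym, ?_⟩, hab⟩
  intro a b a' l hab h
  rcases hR a b a' l hab h with ⟨rfl, h2⟩ | ⟨b'', b', h1, h2, h3, h4⟩
  · exact Or.inl ⟨rfl, b, Relation.ReflTransGen.refl, hab, h2⟩
  · exact Or.inr ⟨b'', b', h1, h2, h3, h4⟩

lemma sbBisim_symm {a b : S} (h : SbBisim trans tau a b) : SbBisim trans tau b a := by
  obtain ⟨R, hR, hab⟩ := h
  exact ⟨R, hR, hR.1 hab⟩

/-- Semi-branching bisimilarity is itself a semi-branching bisimulation. -/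
lemma sbBisim_isSb : IsSemiBranchingBisim trans tau (SbBisim trans tau) := by
  constructor
  · intro a b h; exact sbBisim_symm h
  · intro a b a' l hab h
    obtain ⟨R, hR, hab⟩ := hab
    rcases hR.2 a b a' l hab h with ⟨rfl, b', h1, h2, h3⟩ | ⟨b'', b', h1, h2, h3, h4⟩
    · exact Or.inl ⟨rfl, b', h1, ⟨R, hR, h2⟩, ⟨R, hR, h3⟩⟩
    · exact Or.inr ⟨b'', b', h1, h2, ⟨R, hR, h3⟩, ⟨R, hR, h4⟩⟩

/-- Transfer of silent-star moves across a semi-branching bisimulation. -/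
lemma sb_silentStar {R : S → S → Prop} (hR : IsSemiBranchingBisim trans tau R)
    {b c b'' : S} (hbc : R b c) (h : SilentStar trans tau b b'') :
    ∃ c'', SilentStar trans tau c c'' ∧ R b'' c'' := by
  induction h with
  | refl => exact ⟨c, Relation.ReflTransGen.refl, hbc⟩
  | tail hstep hst ih =>
    obtain ⟨c0, hc0, hRc0⟩ := ih
    rcases hR.2 _ _ _ _ hRc0 hst with ⟨_, c', h1, _, h3⟩ | ⟨c1, c', h1, h2, _, h4⟩
    · exact ⟨c', hc0.trans h1, h3⟩
    · exact ⟨c', hc0.trans (h1.tail h2), h4⟩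

/-- Transitivity of semi-branching bisimilarity: the composition of the
bisimilarity with itself is a semi-branching bisimulation. -/
lemma sbBisim_trans {a b c : S} (hab : SbBisim trans tau a b)
    (hbc : SbBisim trans tau b c) : SbBisim trans tau a c := by
  set T : S → S → Prop := fun x z => ∃ y, SbBisim trans tau x y ∧ SbBisim trans tau y z with hT
  refine ⟨T, ⟨?_, ?_⟩, b, hab, hbc⟩
  · rintro x z ⟨y, h1, h2⟩
    exact ⟨y, sbBisim_symm h2, sbBisim_symm h1⟩
  · rintro x z x' l ⟨y, hxy, hyz⟩ hstep
    have hsb := sbBisim_isSb (trans := trans) (tau := tau)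
    rcases hsb.2 x y x' l hxy hstep with ⟨rfl, y', h1, h2, h3⟩ | ⟨y'', y', h1, h2, h3, h4⟩
    · -- silent stay on the middle: push y ⇒ y' across hyz
      obtain ⟨z', hz', hy'z'⟩ := sb_silentStar hsb hyz h1
      exact Or.inl ⟨rfl, z', hz', ⟨y', h2, hy'z'⟩, ⟨y', h3, hy'z'⟩⟩
    · -- middle moves: y ⇒ y'' →l y'
      obtain ⟨z0, hz0, hy''z0⟩ := sb_silentStar hsb hyz h1
      rcases hsb.2 y'' z0 y' l hy''z0 h2 with ⟨rfl, z', hz1, hz2, hz3⟩ |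
        ⟨z1, z', hz1, hz2, hz3, hz4⟩
      · exact Or.inl ⟨rfl, z', hz0.trans hz1, ⟨y'', h3, hz2⟩, ⟨y', h4, hz3⟩⟩
      · exact Or.inr ⟨z1, z', hz0.trans hz1, hz2, ⟨y'', h3, hz3⟩, ⟨y', h4, hz4⟩⟩

/-- Semi-branching bisimilarity is a branching bisimulation (Basten). -/
lemma sbBisim_isBr : IsBranchingBisim trans tau (SbBisim trans tau) := by
  constructor
  · intro a b h; exact sbBisim_symm h
  · intro a b a' l hab h
    have hsb := sbBisim_isSb (trans := trans) (tau := tau)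
    rcases hsb.2 a b a' l hab h with ⟨rfl, b', _, h2, h3⟩ | ⟨b'', b', h1, h2, h3, h4⟩
    · exact Or.inl ⟨rfl, sbBisim_trans h3 (sbBisim_trans (sbBisim_symm h2) hab)⟩
    · exact Or.inr ⟨b'', b', h1, h2, h3, h4⟩

lemma sbBisim_brBisim {a b : S} (h : SbBisim trans tau a b) : BrBisim trans tau a b :=
  ⟨SbBisim trans tau, sbBisim_isBr, h⟩

end Aux

/-- Branching bisimilarity is an equivalence relation. -/
theorem brBisim_equivalence {S A : Type*} (trans : S → A → S → Prop) (tau : A) :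
    Equivalence (BrBisim trans tau) := by
  constructor
  · intro a
    refine ⟨Eq, ⟨fun x y h => h.symm, ?_⟩, rfl⟩
    rintro x y x' l rfl hstep
    exact Or.inr ⟨x, x', Relation.ReflTransGen.refl, hstep, rfl, rfl⟩
  · rintro a b ⟨R, hR, hab⟩
    exact ⟨R, hR, hR.1 hab⟩
  · intro a b c hab hbc
    exact sbBisim_brBisim (sbBisim_trans (brBisim_sbBisim hab) (brBisim_sbBisim hbc))
end

section
/- (Computation Lemma for branching bisimilarity) If α →τ α₁ →τ α₂ →τ ... →τ α_k is a sequence of silent transitions and α ≃ α_k, then α ≃ α_i for every i with 1 ≤ i ≤ k. -/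
/-! ### Auxiliary machinery: semi-branching bisimulations (Basten) -/

section Semi

variable {S A : Type*} (trans : S → A → S → Prop) (tau : A)

/-- A symmetric relation is a semi-branching bisimulation. -/
def IsSemiBr (R : S → S → Prop) : Prop :=
  Symmetric R ∧
  ∀ a b a' (l : A), R a b → trans a l a' →
    (l = tau ∧ ∃ b', SilentStar trans tau b b' ∧ R a b' ∧ R a' b') ∨
    (∃ b'' b', SilentStar trans tau b b'' ∧ trans b'' l b' ∧ R a b'' ∧ R a' b')

/-- Semi-branching bisimilarity. -/
def SemiBisim (a b : S) : Prop := ∃ R, IsSemiBr trans tau R ∧ R a b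

variable {trans tau}

lemma semi_of_branching {R : S → S → Prop} (h : IsBranchingBisim trans tau R) :
    IsSemiBr trans tau R := by
  refine ⟨h.1, fun a b a' l hR ht => ?_⟩
  rcases h.2 a b a' l hR ht with ⟨rfl, h1⟩ | ⟨b'', b', h1, h2, h3, h4⟩
  · exact Or.inl ⟨rfl, b, Relation.ReflTransGen.refl, hR, h1⟩
  · exact Or.inr ⟨b'', b', h1, h2, h3, h4⟩

lemma semi_union : IsSemiBr trans tau (SemiBisim trans tau) := by
  constructor
  · rintro x y ⟨R, hR, hxy⟩; exact ⟨R, hR, hR.1 hxy⟩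
  · rintro a b a' l ⟨R, hR, hab⟩ ht
    rcases hR.2 a b a' l hab ht with ⟨rfl, b', h1, h2, h3⟩ | ⟨b'', b', h1, h2, h3, h4⟩
    · exact Or.inl ⟨rfl, b', h1, ⟨R, hR, h2⟩, ⟨R, hR, h3⟩⟩
    · exact Or.inr ⟨b'', b', h1, h2, ⟨R, hR, h3⟩, ⟨R, hR, h4⟩⟩

lemma semi_refl (x : S) : SemiBisim trans tau x x := by
  refine ⟨Eq, ⟨fun a b h => h.symm, ?_⟩, rfl⟩
  rintro a b a' l rfl ht
  exact Or.inr ⟨a, a', Relation.ReflTransGen.refl, ht, rfl, rfl⟩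

lemma semi_symm {x y : S} (h : SemiBisim trans tau x y) : SemiBisim trans tau y x :=
  semi_union.1 h

/-- Silent moves of the left component are matched by silent moves of the right. -/
lemma semi_silent_match {R : S → S → Prop} (hR : IsSemiBr trans tau R) {a a' : S}
    (hp : SilentStar trans tau a a') :
    ∀ b, R a b → ∃ b', SilentStar trans tau b b' ∧ R a' b' := by
  induction hp using Relation.ReflTransGen.head_induction_on with
  | refl => exact fun b h => ⟨b, Relation.ReflTransGen.refl, h⟩
  | head hstep _ ih =>
    intro b hab
    rcases hR.2 _ b _ tau hab hstep with ⟨_, b', h1, _, h3⟩ | ⟨b'', b', h1, h2, _, h4⟩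
    · rcases ih b' h3 with ⟨c, hc1, hc2⟩
      exact ⟨c, h1.trans hc1, hc2⟩
    · rcases ih b' h4 with ⟨c, hc1, hc2⟩
      exact ⟨c, (h1.tail h2).trans hc1, hc2⟩

/-- Stuttering for semi-branching bisimilarity. -/
lemma semi_stuttering {a b b0 b' : S} (hab : SemiBisim trans tau a b)
    (h1 : SilentStar trans tau b b0) (h2 : SilentStar trans tau b0 b')
    (hab' : SemiBisim trans tau a b') : SemiBisim trans tau a b0 := by
  classical
  set Sm : S → S → Prop := SemiBisim trans tau with hSm
  set R' : S → S → Prop := fun x y =>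
    Sm x y ∨ (∃ u v, Sm x u ∧ Sm x v ∧ SilentStar trans tau u y ∧ SilentStar trans tau y v)
           ∨ (∃ u v, Sm y u ∧ Sm y v ∧ SilentStar trans tau u x ∧ SilentStar trans tau x v)
    with hR'def
  have hR' : IsSemiBr trans tau R' := by
    constructor
    · rintro x y (h | h | h)
      · exact Or.inl (semi_symm h)
      · exact Or.inr (Or.inr h)
      · exact Or.inr (Or.inl h)
    · rintro x y x' l (hxy | ⟨u, v, hu, hv, huy, hyv⟩ | ⟨u, v, hu, hv, hux, hxv⟩) ht
      · -- ordinary semi-bisimilar pair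
        rcases semi_union.2 x y x' l hxy ht with ⟨rfl, c, hc1, hc2, hc3⟩ |
          ⟨c'', c', hc1, hc2, hc3, hc4⟩
        · exact Or.inl ⟨rfl, c, hc1, Or.inl hc2, Or.inl hc3⟩
        · exact Or.inr ⟨c'', c', hc1, hc2, Or.inl hc3, Or.inl hc4⟩
      · -- x ≈ u ⇒ y ⇒ v ≈ x : moves of x matched from y
        rcases semi_union.2 x v x' l hv ht with ⟨rfl, c, hc1, hc2, hc3⟩ |
          ⟨c'', c', hc1, hc2, hc3, hc4⟩
        · exact Or.inl ⟨rfl, c, hyv.trans hc1, Or.inl hc2, Or.inl hc3⟩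
        · exact Or.inr ⟨c'', c', hyv.trans hc1, hc2, Or.inl hc3, Or.inl hc4⟩
      · -- y ≈ u ⇒ x ⇒ v ≈ y : moves of x matched from y
        obtain ⟨y1, hy1, hxy1⟩ :=
          semi_silent_match semi_union (a := u) (a' := x) hux y (semi_symm hu)
        have hxy1' : Sm x y1 := hxy1
        rcases semi_union.2 x y1 x' l hxy1' ht with ⟨rfl, c, hc1, hc2, hc3⟩ |
          ⟨c'', c', hc1, hc2, hc3, hc4⟩
        · exact Or.inl ⟨rfl, c, hy1.trans hc1, Or.inl hc2, Or.inl hc3⟩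
        · exact Or.inr ⟨c'', c', hy1.trans hc1, hc2, Or.inl hc3, Or.inl hc4⟩
  exact ⟨R', hR', Or.inr (Or.inl ⟨b, b', hab, hab', h1, h2⟩)⟩

/-- Semi-branching bisimilarity is a branching bisimulation. -/
lemma semi_is_branching : IsBranchingBisim trans tau (SemiBisim trans tau) := by
  refine ⟨fun x y h => semi_symm h, fun a b a' l hab ht => ?_⟩
  rcases semi_union.2 a b a' l hab ht with ⟨rfl, b', h1, h2, h3⟩ | ⟨b'', b', h1, h2, h3, h4⟩
  · rcases Relation.ReflTransGen.cases_tail h1 with heq | ⟨c, hc1, hc2⟩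
    · subst heq
      exact Or.inl ⟨rfl, h3⟩
    · have hac :=
        semi_stuttering hab hc1 (Relation.ReflTransGen.single hc2) h2
      exact Or.inr ⟨c, b', hc1, hc2, hac, h3⟩
  · exact Or.inr ⟨b'', b', h1, h2, h3, h4⟩

end Semi

/-- Computation Lemma for branching bisimilarity. -/
theorem computation_lemma_branching {S A : Type*} (trans : S → A → S → Prop)
    (tau : A) (k : ℕ) (f : ℕ → S)
    (hstep : ∀ i < k, trans (f i) tau (f (i + 1)))
    (hbis : BrBisim trans tau (f 0) (f k)) :
    ∀ i ≤ k, BrBisim trans tau (f 0) (f i) := by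
  have path : ∀ {i j : ℕ}, i ≤ j → j ≤ k → SilentStar trans tau (f i) (f j) := by
    intro i j hij hjk
    induction hij with
    | refl => exact Relation.ReflTransGen.refl
    | @step m h ih =>
      exact (ih (Nat.le_of_succ_le hjk)).tail (hstep m (Nat.lt_of_succ_le hjk))
  intro i hik
  have hsemi : SemiBisim trans tau (f 0) (f k) := by
    obtain ⟨R, hR, h⟩ := hbis
    exact ⟨R, semi_of_branching hR, h⟩
  have h0i : SilentStar trans tau (f 0) (f i) := path (Nat.zero_le i) hik
  have hik' : SilentStar trans tau (f i) (f k) := path hik le_rfl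
  have h := semi_stuttering (semi_refl (f 0)) h0i hik' hsemi
  exact ⟨SemiBisim trans tau, semi_is_branching, h⟩
end

section
/- In the counter BPA system Δ₀, for any process α with Var(α) ⊆ B: Z_i^b α ≃ α if and only if α can be written as α₁ B_i^b α₂ with B_i^{1-b} ∉ Var(α₁). -/
/-- One-step transition of a BPA system: X β →λ α β whenever X →λ α is a rule. -/
def BPA.Trans {V A : Type*} (rules : V → A → List V → Prop)
    (p : List V) (l : A) (q : List V) : Prop :=
  ∃ X α β, p = X :: β ∧ rules X l α ∧ q = α ++ β

/-- A step by some action. -/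
def BPA.Step {V A : Type*} (rules : V → A → List V → Prop) (p q : List V) : Prop :=
  ∃ l, BPA.Trans rules p l q

/-- Reachability in a BPA system. -/
def BPA.Reach {V A : Type*} (rules : V → A → List V → Prop) : List V → List V → Prop :=
  Relation.ReflTransGen (BPA.Step rules)

/-- A BPA system is normed if every variable can reach the empty process ε. -/
def BPA.Normed {V A : Type*} (rules : V → A → List V → Prop) : Prop :=
  ∀ X : V, BPA.Reach rules [X] []

/-- The redundant set Rd(α) = { X | Xα ≃ α }. -/
def BPA.Rd {V A : Type*} (rules : V → A → List V → Prop) (tau : A) (α : List V) : Set V :=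
  {X | BrBisim (BPA.Trans rules) tau (X :: α) α}

/-- Variables of the counter system Δ₀. -/
inductive CVar (n : ℕ) : Type
  | B (i : Fin n) (b : Bool)
  | Z (i : Fin n) (b : Bool)
  | BP (i : Fin n) (b : Bool) (j : Fin n) (b' : Bool)
  deriving DecidableEq

/-- Actions of the counter system Δ₀. -/
inductive CAct (n : ℕ) : Type
  | tau
  | d
  | a (i : Fin n) (b : Bool)
  deriving DecidableEq

/-- The rules of the counter system Δ₀. -/
inductive CRule {n : ℕ} : CVar n → CAct n → List (CVar n) → Prop
  | z_a (i : Fin n) (b : Bool) : CRule (.Z i b) (.a i b) []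
  | z_tau (i : Fin n) (b : Bool) : CRule (.Z i b) .tau []
  | b_self (i : Fin n) (b : Bool) : CRule (.B i b) (.a i b) [.B i b]
  | b_d (i : Fin n) (b : Bool) : CRule (.B i b) .d []
  | b_obs (i : Fin n) (b : Bool) (j : Fin n) (b' : Bool) :
      j ≠ i → CRule (.B i b) (.a j b') [.BP i b j b']
  | bp_self (i : Fin n) (b : Bool) (j : Fin n) (b' : Bool) :
      j ≠ i → CRule (.BP i b j b') (.a i b) [.BP i b j b']
  | bp_d (i : Fin n) (b : Bool) (j : Fin n) (b' : Bool) :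
      j ≠ i → CRule (.BP i b j b') .d [.Z j b']
  | bp_obs (i : Fin n) (b : Bool) (j : Fin n) (b' : Bool) (j' : Fin n) (b'' : Bool) :
      j ≠ i → j' ≠ i → CRule (.BP i b j b') (.a j' b'') [.BP i b j' b'']

/-- Branching bisimilarity on processes of Δ₀. -/
def CBisim {n : ℕ} (p q : List (CVar n)) : Prop :=
  BrBisim (BPA.Trans (@CRule n)) CAct.tau p q

/-- Weak bisimilarity on processes of Δ₀. -/
def CWeak {n : ℕ} (p q : List (CVar n)) : Prop :=
  WkBisim (BPA.Trans (@CRule n)) CAct.tau p q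

namespace CounterAux

variable {n : ℕ}

/-- All variables of a process are B-variables. -/
def AllB (γ : List (CVar n)) : Prop := ∀ X ∈ γ, ∃ j c, X = CVar.B j c

/-- The decomposition condition. -/
def Good (i : Fin n) (b : Bool) (γ : List (CVar n)) : Prop :=
  ∃ γ₁ γ₂, γ = γ₁ ++ CVar.B i b :: γ₂ ∧ CVar.B i (!b) ∉ γ₁

theorem transCons {V A : Type*} {rules : V → A → List V → Prop} {X : V} {β q : List V} {l : A}
    (h : BPA.Trans rules (X :: β) l q) : ∃ αr, rules X l αr ∧ q = αr ++ β := by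
  obtain ⟨X', α', β', hp, hr, hq⟩ := h
  injection hp with h1 h2
  subst h1; subst h2
  exact ⟨α', hr, hq⟩

theorem mkTrans {V A : Type*} {rules : V → A → List V → Prop} {X : V} {l : A} {αr : List V}
    (β : List V) (hr : rules X l αr) :
    BPA.Trans rules (X :: β) l (αr ++ β) := ⟨X, αr, β, rfl, hr, rfl⟩

theorem noTauAllB {γ q : List (CVar n)} (h : AllB γ)
    (ht : BPA.Trans (@CRule n) γ CAct.tau q) : False := by
  obtain ⟨X, αr, β, hp, hr, hq⟩ := ht
  subst hp
  obtain ⟨j, c, rfl⟩ := h X (by simp)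
  cases hr

theorem silentAllB {γ q : List (CVar n)} (h : AllB γ)
    (hs : SilentStar (BPA.Trans (@CRule n)) CAct.tau γ q) : q = γ := by
  rcases hs.cases_head with h' | ⟨c, hc, _⟩
  · exact h'.symm
  · exact absurd hc (fun hc => noTauAllB h hc)

/-- The branching bisimulation witnessing the ⇐ direction. -/
inductive CR (i : Fin n) (b : Bool) : List (CVar n) → List (CVar n) → Prop
  | eq (p) : CR i b p p
  | z (γ) : AllB γ → Good i b γ → CR i b (CVar.Z i b :: γ) γ
  | z' (γ) : AllB γ → Good i b γ → CR i b γ (CVar.Z i b :: γ)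
  | bp (j : Fin n) (c : Bool) (δ) : i ≠ j → AllB δ → Good i b δ →
      CR i b (CVar.B j c :: δ) (CVar.BP j c i b :: δ)
  | bp' (j : Fin n) (c : Bool) (δ) : i ≠ j → AllB δ → Good i b δ →
      CR i b (CVar.BP j c i b :: δ) (CVar.B j c :: δ)

theorem CR_bisim (i : Fin n) (b : Bool) :
    IsBranchingBisim (BPA.Trans (@CRule n)) CAct.tau (CR i b) := by
  constructor
  · intro p q h
    cases h with
    | eq p => exact .eq p
    | z _ h1 h2 => exact .z' q h1 h2
    | z' _ h1 h2 => exact .z p h1 h2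
    | bp j c δ hj h1 h2 => exact .bp' j c δ hj h1 h2
    | bp' j c δ hj h1 h2 => exact .bp j c δ hj h1 h2
  · intro a bb a' l hR htr
    cases hR with
    | eq _ =>
      exact Or.inr ⟨a, a', .refl, htr, .eq a, .eq a'⟩
    | z _ hAll hGood =>
      obtain ⟨αr, hr, rfl⟩ := transCons htr
      cases hr with
      | z_tau => exact Or.inl ⟨rfl, by simpa using CR.eq bb⟩
      | z_a =>
        refine Or.inr ?_
        simp only [List.nil_append]
        obtain ⟨γ₁, γ₂, rfl, hnot⟩ := hGood
        cases γ₁ with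
        | nil =>
          refine ⟨_, _, .refl, mkTrans γ₂ (CRule.b_self i b), ?_, ?_⟩
          · exact .z _ hAll ⟨[], γ₂, rfl, by simp⟩
          · simpa using CR.eq (CVar.B i b :: γ₂)
        | cons X γ₁' =>
          obtain ⟨j, c, rfl⟩ := hAll X (by simp)
          by_cases hij : i = j
          · subst hij
            have hc : b = c := by
              cases c <;> cases b <;> simp_all
            subst hc
            refine ⟨_, _, .refl,
              mkTrans (γ₁' ++ CVar.B i b :: γ₂) (CRule.b_self i b), ?_, ?_⟩
            · exact .z _ hAll ⟨CVar.B i b :: γ₁', γ₂, rfl, hnot⟩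
            · simpa using CR.eq (CVar.B i b :: (γ₁' ++ CVar.B i b :: γ₂))
          · refine ⟨_, _, .refl,
              mkTrans (γ₁' ++ CVar.B i b :: γ₂) (CRule.b_obs j c i b hij), ?_, ?_⟩
            · exact .z _ hAll ⟨CVar.B j c :: γ₁', γ₂, rfl, hnot⟩
            · simpa using CR.bp j c (γ₁' ++ CVar.B i b :: γ₂) hij
                (fun X hX => hAll X (by simp [hX]))
                ⟨γ₁', γ₂, rfl, fun hm => hnot (by simp [hm])⟩
    | z' _ hAll hGood =>
      refine Or.inr ⟨a, a', Relation.ReflTransGen.single ?_, htr, .eq a, .eq a'⟩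
      simpa using mkTrans a (CRule.z_tau i b)
    | bp j c δ hij hAll hGood =>
      obtain ⟨αr, hr, rfl⟩ := transCons htr
      refine Or.inr ?_
      cases hr with
      | b_self =>
        exact ⟨_, _, .refl, mkTrans δ (CRule.bp_self j c i b hij),
          .bp j c δ hij hAll hGood, .bp j c δ hij hAll hGood⟩
      | b_d =>
        refine ⟨_, _, .refl, mkTrans δ (CRule.bp_d j c i b hij),
          .bp j c δ hij hAll hGood, ?_⟩
        simpa using CR.z' δ hAll hGood
      | b_obs _ _ k c' hkj =>
        exact ⟨_, _, .refl, mkTrans δ (CRule.bp_obs j c i b k c' hij hkj),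
          .bp j c δ hij hAll hGood, .eq _⟩
    | bp' j c δ hij hAll hGood =>
      obtain ⟨αr, hr, rfl⟩ := transCons htr
      refine Or.inr ?_
      cases hr with
      | bp_self =>
        exact ⟨_, _, .refl, mkTrans δ (CRule.b_self j c),
          .bp' j c δ hij hAll hGood, .bp' j c δ hij hAll hGood⟩
      | bp_d =>
        refine ⟨_, _, .refl, mkTrans δ (CRule.b_d j c),
          .bp' j c δ hij hAll hGood, ?_⟩
        simpa using CR.z δ hAll hGood
      | bp_obs _ _ _ _ k c' _ hkj =>
        exact ⟨_, _, .refl, mkTrans δ (CRule.b_obs j c k c' hkj),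
          .bp' j c δ hij hAll hGood, .eq _⟩

theorem forward (i : Fin n) (b : Bool) :
    ∀ α : List (CVar n), AllB α → CBisim (CVar.Z i b :: α) α → Good i b α := by
  intro α
  induction α with
  | nil =>
    rintro _ ⟨R, hR, hr⟩
    have htr0 : BPA.Trans (@CRule n) (CVar.Z i b :: ([] : List (CVar n)))
        (CAct.a i b) ([] ++ []) := mkTrans [] (CRule.z_a i b)
    rcases hR.2 _ _ _ _ hr htr0 with ⟨h, _⟩ | ⟨b'', b', hsil, htr, _, _⟩
    · cases h
    · have hb'' : b'' = [] := silentAllB (by intro X hX; cases hX) hsil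
      subst hb''
      obtain ⟨X, αr, β, hp, _, _⟩ := htr
      cases hp
  | cons X β ih =>
    rintro hAll ⟨R, hR, hr⟩
    have htr0 : BPA.Trans (@CRule n) (CVar.Z i b :: (X :: β))
        (CAct.a i b) ([] ++ (X :: β)) := mkTrans _ (CRule.z_a i b)
    rcases hR.2 _ _ _ _ hr htr0 with ⟨h, _⟩ | ⟨b'', b', hsil, htr, _, h2⟩
    · cases h
    · have hb'' : b'' = X :: β := silentAllB hAll hsil
      subst hb''
      obtain ⟨αr, hrule, rfl⟩ := transCons htr
      obtain ⟨j, c, rfl⟩ := hAll X (by simp)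
      cases hrule with
      | b_self => exact ⟨[], β, rfl, by simp⟩
      | b_obs _ _ _ _ hij =>
        -- h2 : R ([] ++ (B j c :: β)) ([BP j c i b] ++ β)
        have h2' : R (CVar.BP j c i b :: β) (CVar.B j c :: β) := hR.1 (by simpa using h2)
        have htr2 : BPA.Trans (@CRule n) (CVar.BP j c i b :: β) CAct.d
            ([CVar.Z i b] ++ β) := mkTrans β (CRule.bp_d j c i b hij)
        rcases hR.2 _ _ _ _ h2' htr2 with ⟨h, _⟩ | ⟨g, g', hsil2, htrg, _, h3⟩
        · cases h
        · have hAllβ : AllB β := fun Y hY => hAll Y (by simp [hY])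
          have hg : g = CVar.B j c :: β := silentAllB hAll hsil2
          subst hg
          obtain ⟨αr', hrule', rfl⟩ := transCons htrg
          cases hrule' with
          | b_d =>
            obtain ⟨β₁, β₂, rfl, hnot⟩ := ih hAllβ ⟨R, hR, by simpa using h3⟩
            refine ⟨CVar.B j c :: β₁, β₂, rfl, ?_⟩
            intro hm
            rcases List.mem_cons.mp hm with hm | hm
            · injection hm with h1 _; exact hij h1
            · exact hnot hm

end CounterAux

/-- Bit test characterization in the counter system Δ₀:
Z_i^b α ≃ α iff α = α₁ B_i^b α₂ with B_i^{1-b} ∉ Var(α₁). -/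
theorem counter_bit_test {n : ℕ} (α : List (CVar n))
    (hα : ∀ X ∈ α, ∃ i b, X = CVar.B i b) (i : Fin n) (b : Bool) :
    CBisim (CVar.Z i b :: α) α ↔
      ∃ α₁ α₂ : List (CVar n),
        α = α₁ ++ CVar.B i b :: α₂ ∧ CVar.B i (!b) ∉ α₁ := by
  constructor
  · intro h
    exact CounterAux.forward i b α (fun X hX => hα X hX) h
  · rintro ⟨α₁, α₂, hdec, hnot⟩
    exact ⟨CounterAux.CR i b, CounterAux.CR_bisim i b,
      .z α (fun X hX => hα X hX) ⟨α₁, α₂, hdec, hnot⟩⟩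
end

section
/- In the counter BPA system Δ₀, for any process α with Var(α) ⊆ B, if Z_i^b α ≃ α then Z_i^{1-b} α ≄ α (the same bit cannot take both values). -/
/-- The bit of the first B-variable with index i in a list. -/
def firstBit {n : ℕ} (i : Fin n) : List (CVar n) → Option Bool
  | [] => none
  | (CVar.B j c) :: β => if j = i then some c else firstBit i β
  | _ :: β => firstBit i β

lemma no_tau {n : ℕ} {γ : List (CVar n)} (hγ : ∀ X ∈ γ, ∃ i b, X = CVar.B i b)
    (q : List (CVar n)) : ¬ BPA.Trans (@CRule n) γ CAct.tau q := by
  rintro ⟨X, a, β, rfl, hr, hq⟩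
  obtain ⟨i, b, rfl⟩ := hγ X (by simp)
  cases hr

lemma silent_id {n : ℕ} {γ δ : List (CVar n)} (hγ : ∀ X ∈ γ, ∃ i b, X = CVar.B i b)
    (h : SilentStar (BPA.Trans (@CRule n)) CAct.tau γ δ) : δ = γ := by
  rcases h.cases_head with h | ⟨c, hc, _⟩
  · exact h.symm
  · exact absurd hc (no_tau hγ c)

lemma key_firstBit {n : ℕ} : ∀ (α : List (CVar n)),
    (∀ X ∈ α, ∃ i b, X = CVar.B i b) →
    ∀ (i : Fin n) (b : Bool), CBisim (CVar.Z i b :: α) α → firstBit i α = some b := by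
  intro α
  induction α with
  | nil =>
    rintro _ i b ⟨R, ⟨hsym, hstep⟩, hR⟩
    have ht : BPA.Trans (@CRule n) [CVar.Z i b] (CAct.a i b) [] :=
      ⟨CVar.Z i b, [], [], rfl, CRule.z_a i b, rfl⟩
    rcases hstep _ _ _ _ hR ht with ⟨h1, _⟩ | ⟨g1, g2, hs, ht2, _, _⟩
    · cases h1
    · have hg : g1 = [] := silent_id (by simp) hs
      subst hg
      obtain ⟨X, a, β, hp, _, _⟩ := ht2
      simp at hp
  | cons X β ih =>
    intro hmem i b hbis
    obtain ⟨j, c, rfl⟩ := hmem X (by simp)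
    obtain ⟨R, ⟨hsym, hstep⟩, hR⟩ := hbis
    have ht : BPA.Trans (@CRule n) (CVar.Z i b :: CVar.B j c :: β) (CAct.a i b)
        (CVar.B j c :: β) :=
      ⟨CVar.Z i b, [], CVar.B j c :: β, rfl, CRule.z_a i b, rfl⟩
    rcases hstep _ _ _ _ hR ht with ⟨h1, _⟩ | ⟨g1, g2, hs, ht2, hR1, hR2⟩
    · cases h1
    · have hg : g1 = CVar.B j c :: β := silent_id hmem hs
      subst hg
      obtain ⟨X, a, β', hp, hr, hq⟩ := ht2
      obtain ⟨h1, h2⟩ : CVar.B j c = X ∧ β = β' := by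
        refine ⟨?_, ?_⟩ <;> [exact (List.cons.injEq _ _ _ _ ▸ hp).1;
          exact (List.cons.injEq _ _ _ _ ▸ hp).2]
      subst h1; subst h2
      cases hr with
      | b_self => simp [firstBit]
      | b_obs _ _ _ _ hne =>
        subst hq
        -- g2 = BP j c i b :: β, and R (B j c :: β) g2
        have htd : BPA.Trans (@CRule n) (CVar.BP j c i b :: β) CAct.d
            (CVar.Z i b :: β) :=
          ⟨CVar.BP j c i b, [CVar.Z i b], β, rfl, CRule.bp_d j c i b hne, rfl⟩
        rcases hstep _ _ _ _ (hsym hR2) htd with ⟨h1, _⟩ | ⟨g3, g4, hs2, ht3, _, hR4⟩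
        · cases h1
        · have hg : g3 = CVar.B j c :: β := silent_id hmem hs2
          subst hg
          obtain ⟨X, a, β', hp2, hr2, hq2⟩ := ht3
          obtain ⟨h1, h2⟩ : CVar.B j c = X ∧ β = β' := by
            refine ⟨?_, ?_⟩ <;> [exact (List.cons.injEq _ _ _ _ ▸ hp2).1;
              exact (List.cons.injEq _ _ _ _ ▸ hp2).2]
          subst h1; subst h2
          cases hr2 with
          | b_d =>
            simp only [List.nil_append] at hq2
            rw [hq2] at hR4
            have hβ : firstBit i β = some b :=
              ih (fun X hX => hmem X (List.mem_cons_of_mem _ hX)) i b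
                ⟨R, ⟨hsym, hstep⟩, hR4⟩
            simp [firstBit, if_neg (Ne.symm hne), hβ]

/-- In the counter system Δ₀, the same bit cannot take both values:
Z_i^b α ≃ α implies Z_i^{1-b} α ≄ α. -/
theorem counter_bit_unique {n : ℕ} (α : List (CVar n))
    (hα : ∀ X ∈ α, ∃ i b, X = CVar.B i b) (i : Fin n) (b : Bool)
    (h : CBisim (CVar.Z i b :: α) α) :
    ¬ CBisim (CVar.Z i (!b) :: α) α := by
  intro h2
  have h1 := key_firstBit α hα i b h
  have h2' := key_firstBit α hα i (!b) h2
  rw [h1] at h2'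
  cases b <;> simp at h2'
end

section
/- In the counter BPA system Δ₀, for any process α with Var(α) ⊆ B: Z_i^b α ≃ α (branching bisimilar) if and only if Z_i^b α ≈ α (weakly bisimilar). -/
/-! Branching bisimilarity implies weak bisimilarity, so only the converse needs work.
If `Z_i^b α ≈ α` with `α` built from `B`-variables, then `α`, which has no τ-steps, must answer
the move `Z_i^b α →(a_i^b) α` directly. Its head `B_j^c` can do so either by `B_i^b →(a_i^b) B_i^b`
(then `j = i`, `c = b`), or, if `j ≠ i`, by moving to `B_j^c(i,b)`; in the second case the `d`-step
`B_j^c(i,b) γ →d Z_i^b γ` must be answered by `B_j^c γ →d γ`, so `Z_i^b γ ≈ γ` on the tail.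
Hence the first variable of `α` with index `i` is `B_i^b`. Conversely, for such `α` an explicit
branching bisimulation relates `Z_i^b α` with `α`. -/

section Bisimulation

variable {S A : Type*} {trans : S → A → S → Prop} {tau : A}

lemma IsBranchingBisim.isWeakBisim {R : S → S → Prop} (h : IsBranchingBisim trans tau R) :
    IsWeakBisim trans tau R := by
  refine ⟨h.1, fun a b a' l hab ha => ?_⟩
  rcases h.2 a b a' l hab ha with hτ | ⟨b'', b', hbb'', hb'', -, hR'⟩
  · exact Or.inl hτ
  · exact Or.inr ⟨b'', b', b', hbb'', hb'', .refl, hR'⟩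

lemma BrBisim.wkBisim {a b : S} (h : BrBisim trans tau a b) : WkBisim trans tau a b :=
  let ⟨R, hR, hab⟩ := h
  ⟨R, hR.isWeakBisim, hab⟩

lemma SilentStar.eq_of_forall_not_trans_tau {p q : S} (hp : ∀ p', ¬ trans p tau p')
    (h : SilentStar trans tau p q) : q = p := by
  rcases Relation.ReflTransGen.cases_head h with rfl | ⟨p', hp', -⟩
  · rfl
  · exact (hp p' hp').elim

lemma IsWeakBisim.exists_trans_of_forall_not_trans_tau {R : S → S → Prop}
    (hR : IsWeakBisim trans tau R) {a b a' : S} {l : A} (hab : R a b) (ha : trans a l a')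
    (hl : l ≠ tau) (hb : ∀ b', ¬ trans b tau b') :
    ∃ b₁ b', trans b l b₁ ∧ SilentStar trans tau b₁ b' ∧ R a' b' := by
  rcases hR.2 a b a' l hab ha with ⟨rfl, -⟩ | ⟨b₀, b₁, b', hbb₀, hb₀, hb₁, hR'⟩
  · exact (hl rfl).elim
  · obtain rfl := hbb₀.eq_of_forall_not_trans_tau hb
    exact ⟨b₁, b', hb₀, hb₁, hR'⟩

variable (trans tau) in
def BranchingMatch (R : S → S → Prop) (a b a' : S) (l : A) : Prop :=
  (l = tau ∧ R a' b) ∨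
    ∃ b'' b', SilentStar trans tau b b'' ∧ trans b'' l b' ∧ R a b'' ∧ R a' b'

lemma BranchingMatch.of_trans {R : S → S → Prop} {a b a' b' : S} {l : A} (hab : R a b)
    (hb : trans b l b') (hR' : R a' b') : BranchingMatch trans tau R a b a' l :=
  .inr ⟨b, b', .refl, hb, hab, hR'⟩

end Bisimulation

namespace BPA

variable {V A : Type*} {rules : V → A → List V → Prop}

lemma trans_cons_iff {X : V} {β q : List V} {l : A} :
    BPA.Trans rules (X :: β) l q ↔ ∃ γ, rules X l γ ∧ q = γ ++ β := by
  constructor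
  · rintro ⟨Y, γ, β', h, hr, rfl⟩
    obtain ⟨rfl, rfl⟩ := List.cons_eq_cons.mp h
    exact ⟨γ, hr, rfl⟩
  · rintro ⟨γ, hr, rfl⟩
    exact ⟨X, γ, β, rfl, hr, rfl⟩

lemma Trans.cons {X : V} {γ β : List V} {l : A} (h : rules X l γ) :
    BPA.Trans rules (X :: β) l (γ ++ β) :=
  trans_cons_iff.2 ⟨γ, h, rfl⟩

lemma not_trans_nil {l : A} {q : List V} : ¬ BPA.Trans rules [] l q := by
  rintro ⟨_, _, _, h, -⟩
  cases h

end BPA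

namespace CRule

variable {n : ℕ}

lemma trans_tau_iff {p q : List (CVar n)} :
    BPA.Trans CRule p .tau q ↔ ∃ j c, p = .Z j c :: q := by
  constructor
  · rintro ⟨X, γ, β, rfl, hr, rfl⟩
    cases hr
    exact ⟨_, _, rfl⟩
  · rintro ⟨j, c, rfl⟩
    exact BPA.Trans.cons (CRule.z_tau j c)

lemma not_trans_tau_of_head_ne_Z {p : List (CVar n)} (hp : ∀ j c γ, p ≠ .Z j c :: γ)
    (q : List (CVar n)) : ¬ BPA.Trans CRule p .tau q := fun h =>
  let ⟨j, c, hpq⟩ := trans_tau_iff.1 h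
  hp j c q hpq

lemma not_trans_tau_of_forall_B {p : List (CVar n)} (hp : ∀ X ∈ p, ∃ j c, X = .B j c)
    (q : List (CVar n)) : ¬ BPA.Trans CRule p .tau q := by
  refine not_trans_tau_of_head_ne_Z (fun j c γ hpZ => ?_) q
  obtain ⟨_, _, h⟩ := hp (.Z j c) (hpZ ▸ List.mem_cons_self)
  cases h

end CRule

section Counter

variable {n : ℕ}

inductive FirstBitEq (i : Fin n) (b : Bool) : List (CVar n) → Prop
  | head (δ : List (CVar n)) : FirstBitEq i b (.B i b :: δ)
  | cons {j : Fin n} (c : Bool) {δ : List (CVar n)} :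
      j ≠ i → FirstBitEq i b δ → FirstBitEq i b (.B j c :: δ)

/-- After `Z_i^b δ →(a_i^b) δ`, a head `B_j^c` with `j ≠ i` of `δ` can only answer by moving to
`B_j^c(i,b)`, which remembers that `Z_i^b` is still owed and pays it with its `d`-step. -/
inductive BitTestRel (i : Fin n) (b : Bool) : List (CVar n) → List (CVar n) → Prop
  | refl (α : List (CVar n)) : BitTestRel i b α α
  | z {δ : List (CVar n)} : FirstBitEq i b δ → BitTestRel i b (.Z i b :: δ) δ
  | z_symm {δ : List (CVar n)} : FirstBitEq i b δ → BitTestRel i b δ (.Z i b :: δ)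
  | bp {j : Fin n} (c : Bool) {δ : List (CVar n)} :
      j ≠ i → FirstBitEq i b δ → BitTestRel i b (.B j c :: δ) (.BP j c i b :: δ)
  | bp_symm {j : Fin n} (c : Bool) {δ : List (CVar n)} :
      j ≠ i → FirstBitEq i b δ → BitTestRel i b (.BP j c i b :: δ) (.B j c :: δ)

namespace BitTestRel

variable {i : Fin n} {b : Bool}

lemma symmetric : Symmetric (BitTestRel i b) := by
  rintro p q (_ | hδ | hδ | ⟨c, hji, hδ⟩ | ⟨c, hji, hδ⟩)
  · exact .refl _
  · exact .z_symm hδ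
  · exact .z hδ
  · exact .bp_symm c hji hδ
  · exact .bp c hji hδ

lemma branchingMatch_z {δ p' : List (CVar n)} {l : CAct n} (hδ : FirstBitEq i b δ)
    (ht : BPA.Trans CRule (.Z i b :: δ) l p') :
    BranchingMatch (BPA.Trans CRule) .tau (BitTestRel i b) (.Z i b :: δ) δ p' l := by
  obtain ⟨γ, hr, rfl⟩ := BPA.trans_cons_iff.1 ht
  cases hr with
  | z_tau => exact .inl ⟨rfl, .refl _⟩
  | z_a =>
    cases hδ with
    | head δ => exact .of_trans (.z (.head δ)) (.cons (.b_self i b)) (.refl _)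
    | cons c hji hδ =>
      exact .of_trans (.z (.cons c hji hδ)) (.cons (.b_obs _ c i b hji.symm)) (.bp c hji hδ)

lemma branchingMatch_z_symm {δ p' : List (CVar n)} {l : CAct n} (ht : BPA.Trans CRule δ l p') :
    BranchingMatch (BPA.Trans CRule) .tau (BitTestRel i b) δ (.Z i b :: δ) p' l :=
  .inr ⟨δ, p', .single (BPA.Trans.cons (CRule.z_tau i b)), ht, .refl _, .refl _⟩

lemma branchingMatch_bp {j : Fin n} {c : Bool} {δ p' : List (CVar n)} {l : CAct n}
    (hji : j ≠ i) (hδ : FirstBitEq i b δ) (ht : BPA.Trans CRule (.B j c :: δ) l p') :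
    BranchingMatch (BPA.Trans CRule) .tau (BitTestRel i b)
      (.B j c :: δ) (.BP j c i b :: δ) p' l := by
  have hR : BitTestRel i b (.B j c :: δ) (.BP j c i b :: δ) := .bp c hji hδ
  obtain ⟨γ, hr, rfl⟩ := BPA.trans_cons_iff.1 ht
  cases hr with
  | b_self => exact .of_trans hR (.cons (.bp_self j c i b hji.symm)) hR
  | b_d => exact .of_trans hR (.cons (.bp_d j c i b hji.symm)) (.z_symm hδ)
  | b_obs _ _ k c' hkj => exact .of_trans hR (.cons (.bp_obs j c i b k c' hji.symm hkj)) (.refl _)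

lemma branchingMatch_bp_symm {j : Fin n} {c : Bool} {δ p' : List (CVar n)} {l : CAct n}
    (hji : j ≠ i) (hδ : FirstBitEq i b δ) (ht : BPA.Trans CRule (.BP j c i b :: δ) l p') :
    BranchingMatch (BPA.Trans CRule) .tau (BitTestRel i b)
      (.BP j c i b :: δ) (.B j c :: δ) p' l := by
  have hR : BitTestRel i b (.BP j c i b :: δ) (.B j c :: δ) := .bp_symm c hji hδ
  obtain ⟨γ, hr, rfl⟩ := BPA.trans_cons_iff.1 ht
  cases hr with
  | bp_self => exact .of_trans hR (.cons (.b_self j c)) hR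
  | bp_d => exact .of_trans hR (.cons (.b_d j c)) (.z hδ)
  | bp_obs _ _ _ _ k c' _ hkj => exact .of_trans hR (.cons (.b_obs j c k c' hkj)) (.refl _)

lemma isBranchingBisim : IsBranchingBisim (BPA.Trans CRule) .tau (BitTestRel i b) := by
  refine ⟨symmetric, fun p q p' l hpq ht => ?_⟩
  cases hpq with
  | refl => exact BranchingMatch.of_trans (.refl p) ht (.refl p')
  | z hδ => exact branchingMatch_z hδ ht
  | z_symm hδ => exact branchingMatch_z_symm ht
  | bp c hji hδ => exact branchingMatch_bp hji hδ ht
  | bp_symm c hji hδ => exact branchingMatch_bp_symm hji hδ ht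

end BitTestRel

lemma FirstBitEq.of_isWeakBisim {R : List (CVar n) → List (CVar n) → Prop}
    (hR : IsWeakBisim (BPA.Trans CRule) .tau R) {i : Fin n} {b : Bool} {α : List (CVar n)}
    (hα : ∀ X ∈ α, ∃ j c, X = .B j c) (hZ : R (.Z i b :: α) α) : FirstBitEq i b α := by
  induction α with
  | nil =>
    obtain ⟨_, _, hε, -⟩ := hR.exists_trans_of_forall_not_trans_tau hZ (.cons (.z_a i b))
      (by simp) fun _ => BPA.not_trans_nil
    exact (BPA.not_trans_nil hε).elim
  | cons X γ ih =>
    obtain ⟨j, c, rfl⟩ := hα X List.mem_cons_self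
    have hγ : ∀ Y ∈ γ, ∃ j c, Y = .B j c := fun Y hY => hα Y (List.mem_cons_of_mem _ hY)
    obtain ⟨_, β, hB, hβ, hRβ⟩ := hR.exists_trans_of_forall_not_trans_tau hZ
      (.cons (.z_a i b)) (by simp) (CRule.not_trans_tau_of_forall_B hα)
    obtain ⟨_, hr, rfl⟩ := BPA.trans_cons_iff.1 hB
    cases hr with
    | b_self => exact .head γ
    | b_obs _ _ _ _ hij =>
      obtain rfl := hβ.eq_of_forall_not_trans_tau (CRule.not_trans_tau_of_head_ne_Z (by simp))
      obtain ⟨_, β', hB', hβ', hRβ'⟩ := hR.exists_trans_of_forall_not_trans_tau (hR.1 hRβ)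
        (.cons (.bp_d j c i b hij)) (by simp) (CRule.not_trans_tau_of_forall_B hα)
      obtain ⟨_, hr', rfl⟩ := BPA.trans_cons_iff.1 hB'
      cases hr' with
      | b_d =>
        obtain rfl := hβ'.eq_of_forall_not_trans_tau (CRule.not_trans_tau_of_forall_B hγ)
        exact .cons c hij.symm (ih hγ hRβ')
end Counter

/-- Bit tests in the counter system Δ₀ coincide for branching and weak
bisimilarity: Z_i^b α ≃ α iff Z_i^b α ≈ α. -/
theorem counter_bit_test_weak {n : ℕ} (α : List (CVar n))
    (hα : ∀ X ∈ α, ∃ i b, X = CVar.B i b) (i : Fin n) (b : Bool) :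
    CBisim (CVar.Z i b :: α) α ↔ CWeak (CVar.Z i b :: α) α :=
  ⟨BrBisim.wkBisim, fun ⟨_, hR, hZ⟩ =>
    ⟨BitTestRel i b, BitTestRel.isBranchingBisim, .z (FirstBitEq.of_isWeakBisim hR hα hZ)⟩⟩
end
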